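/- arXiv:2302.01097 — 2 statements merged into one kernel-verified Lean document; each statement's English description precedes it below -/
import Mathlib

section
/- Let L be a finite tree language over a ranked alphabet Σ and let STAut_L be its SubTree automaton. Then the down language of every state q of STAut_L is the singleton {q}; consequently, distinct states of STAut_L have distinct down languages. -/
/-- Trees over a ranked alphabet `σ` with arity function `ar`:
`t = f(t₁,…,t_k)` where `k = ar f`. -/
inductive RTree (σ : Type) (ar : σ → ℕ) : Type where
  | node : (f : σ) → (Fin (ar f) → RTree σ ar) → RTree σ ar

variable {σ : Type} {ar : σ → ℕ}

/-- Number of nodes of a tree. -/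
def RTree.size : RTree σ ar → ℕ
  | .node _ ts => 1 + ∑ i, (ts i).size

/-- The set `SubTree(t)` of subtrees of a tree. -/
def RTree.subTree : RTree σ ar → Set (RTree σ ar)
  | .node f ts => insert (.node f ts) (⋃ i, (ts i).subTree)

open Classical in
/-- `SubTreeSeries_t`: the indicator of the whole tree plus the sum of the
series of its immediate subtrees. -/
noncomputable def RTree.subTreeSeries : RTree σ ar → RTree σ ar → ℕ
  | .node f ts, s => (if s = .node f ts then 1 else 0) + ∑ i, (ts i).subTreeSeries s

/-- The subtree of `t` rooted at position `p` (a node given by a list of child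
indices), if `p` is indeed a node of `t`. -/
def RTree.subtreeAt : RTree σ ar → List ℕ → Option (RTree σ ar)
  | t, [] => some t
  | .node f ts, i :: p => if h : i < ar f then (ts ⟨i, h⟩).subtreeAt p else none

/-- `SubTreeSet(L) = ⋃_{t ∈ L} SubTree(t)` for a finite tree language `L`. -/
def subTreeSet (L : Finset (RTree σ ar)) : Set (RTree σ ar) := ⋃ t ∈ L, t.subTree

/-- `SubTreeSeries_L = ∑_{t ∈ L} SubTreeSeries_t`. -/
noncomputable def subTreeSeriesL (L : Finset (RTree σ ar)) (s : RTree σ ar) : ℕ :=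
  ∑ t ∈ L, t.subTreeSeries s

/-- The SubTree kernel of two finite tree languages:
`∑_t SubTreeSeries_X(t) · SubTreeSeries_Y(t)` (finitely supported sum). -/
noncomputable def subTreeKernel (X Y : Finset (RTree σ ar)) : ℕ :=
  ∑ᶠ t, subTreeSeriesL X t * subTreeSeriesL Y t

theorem RTree.subTree_finite (t : RTree σ ar) : t.subTree.Finite := by
  induction t with
  | node f ts ih =>
    rw [RTree.subTree]
    exact (Set.finite_iUnion ih).insert _

theorem subTreeSet_finite (L : Finset (RTree σ ar)) : (subTreeSet L).Finite :=
  Set.Finite.biUnion L.finite_toSet fun t _ => t.subTree_finite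

/-- A Root-Weighted Tree Automaton with weights in `M`:
a finite state type `Q`, a root weight function `ν`, and a transition relation `δ`,
where `δ f q qs` means `(q, f, qs 1, …, qs k) ∈ δ` (with `k = ar f`). -/
structure RWTA (σ : Type) (ar : σ → ℕ) (M : Type) where
  Q : Type
  finQ : Finite Q
  ν : Q → M
  δ : (f : σ) → Q → (Fin (ar f) → Q) → Prop

variable {M : Type}

/-- The set of states reached on a tree:
`Δ(f(t₁,…,t_k)) = δ(f, Δ(t₁), …, Δ(t_k))`. -/
def RWTA.Δ (A : RWTA σ ar M) : RTree σ ar → Set A.Q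
  | .node f ts => {q | ∃ qs, A.δ f q qs ∧ ∀ i, qs i ∈ A.Δ (ts i)}

/-- The formal tree series realized by an RWTA: `P_A(t) = ∑_{q ∈ Δ(t)} ν(q)`
(equal to `0` when `Δ(t) = ∅`). -/
noncomputable def RWTA.P [AddCommMonoid M] (A : RWTA σ ar M) (t : RTree σ ar) : M :=
  ∑ᶠ q ∈ A.Δ t, A.ν q

/-- The SubTree automaton `STAut_L` of a finite tree language `L`: states are the
elements of `SubTreeSet(L)`, root weight of a state `t` is `SubTreeSeries_L(t)`, and
the transitions are `(f(t₁,…,t_k), f, t₁, …, t_k)` for states `f(t₁,…,t_k)`. -/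
noncomputable def STAut (L : Finset (RTree σ ar)) : RWTA σ ar ℕ where
  Q := ↥(subTreeSet L)
  finQ := (subTreeSet_finite L).to_subtype
  ν q := subTreeSeriesL L q.1
  δ f q qs := (q : RTree σ ar) = .node f fun i => (qs i : RTree σ ar)

/-- The product RWTA `A ⊙ B`: states `Q_A × Q_B`, componentwise transitions, and
root weights `ν((p,q)) = ν_A(p) · ν_B(q)`. -/
def RWTA.prod [Mul M] (A B : RWTA σ ar M) : RWTA σ ar M where
  Q := A.Q × B.Q
  finQ := by have := A.finQ; have := B.finQ; exact inferInstance
  ν pq := A.ν pq.1 * B.ν pq.2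
  δ f pq qs := A.δ f pq.1 (fun i => (qs i).1) ∧ B.δ f pq.2 fun i => (qs i).2

namespace RTree

theorem mem_subTree_self (t : RTree σ ar) : t ∈ t.subTree := by
  cases t
  exact Set.mem_insert _ _

theorem child_mem_subTree (f : σ) (ts : Fin (ar f) → RTree σ ar) (i : Fin (ar f)) :
    ts i ∈ (node f ts).subTree :=
  Set.mem_insert_of_mem _ (Set.mem_iUnion_of_mem i (ts i).mem_subTree_self)

theorem subTree_subset_of_mem {s t : RTree σ ar} (h : s ∈ t.subTree) :
    s.subTree ⊆ t.subTree := by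
  induction t with
  | node f ts ih =>
    rcases h with rfl | h
    · rfl
    · obtain ⟨i, hi⟩ := Set.mem_iUnion.1 h
      rw [subTree]
      exact (ih i hi).trans
        ((Set.subset_iUnion (fun j => (ts j).subTree) i).trans (Set.subset_insert _ _))

end RTree

theorem child_mem_subTreeSet {L : Finset (RTree σ ar)} {f : σ} {ts : Fin (ar f) → RTree σ ar}
    (h : .node f ts ∈ subTreeSet L) (i : Fin (ar f)) : ts i ∈ subTreeSet L := by
  obtain ⟨u, hu, hmem⟩ := Set.mem_iUnion₂.1 h
  exact Set.mem_iUnion₂.2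
    ⟨u, hu, RTree.subTree_subset_of_mem hmem (RTree.child_mem_subTree f ts i)⟩

theorem STAut_mem_Δ_iff (L : Finset (RTree σ ar)) (t : RTree σ ar) (q : ↥(subTreeSet L)) :
    q ∈ (STAut L).Δ t ↔ (q : RTree σ ar) = t := by
  induction t generalizing q with
  | node f ts ih =>
    constructor
    · rintro ⟨qs, hq, hqs⟩
      exact hq.trans (congrArg _ (funext fun i => (ih i (qs i)).1 (hqs i)))
    · intro hq
      have hts := child_mem_subTreeSet (hq ▸ q.2)
      exact ⟨fun i => ⟨ts i, hts i⟩, hq, fun i => (ih i _).2 rfl⟩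

/-- The down language of every state `q` of `STAut_L` is the singleton `{q}`;
consequently, distinct states have distinct down languages. -/
theorem STAut_down_language (L : Finset (RTree σ ar)) :
    (∀ q : ↥(subTreeSet L), {t : RTree σ ar | q ∈ (STAut L).Δ t} = {(q : RTree σ ar)}) ∧
      ∀ p q : ↥(subTreeSet L),
        {t : RTree σ ar | p ∈ (STAut L).Δ t} = {t : RTree σ ar | q ∈ (STAut L).Δ t} → p = q := by
  have down_eq : ∀ q : ↥(subTreeSet L),
      {t : RTree σ ar | q ∈ (STAut L).Δ t} = {(q : RTree σ ar)} := fun q =>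
    Set.ext fun t => (STAut_mem_Δ_iff L t q).trans eq_comm
  refine ⟨down_eq, fun p q h => ?_⟩
  rw [down_eq p, down_eq q] at h
  exact Subtype.ext (Set.singleton_eq_singleton_iff.1 h)
end

section
/- Let X and Y be finite tree languages over a ranked alphabet Σ, and let A_X = STAut_X and A_Y = STAut_Y be their SubTree automata. Then SubTreeKernel(X,Y) = Σ_{t} P_{A_X ⊙ A_Y}(t), the sum over all trees t of the coefficients of the series realized by the product automaton A_X ⊙ A_Y (this series has finite support, so the sum is well defined). -/
variable {σ : Type} {ar : σ → ℕ}

variable {M : Type}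

theorem RTree.self_mem_subTree (t : RTree σ ar) : t ∈ t.subTree := by
  cases t with
  | node f ts => rw [RTree.subTree]; exact Set.mem_insert _ _

theorem RTree.subTree_trans {s t : RTree σ ar} (h : s ∈ t.subTree) :
    s.subTree ⊆ t.subTree := by
  induction t with
  | node f ts ih =>
    rw [RTree.subTree] at h ⊢
    rcases Set.mem_insert_iff.mp h with h | h
    · subst h; rw [RTree.subTree]
    · rcases Set.mem_iUnion.mp h with ⟨i, hi⟩
      intro x hx
      exact Set.mem_insert_iff.mpr (Or.inr (Set.mem_iUnion.mpr ⟨i, ih i hi hx⟩))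

theorem RTree.child_mem_subTree_s14 (f : σ) (ts : Fin (ar f) → RTree σ ar) (i : Fin (ar f)) :
    ts i ∈ (RTree.node f ts).subTree := by
  rw [RTree.subTree]
  exact Set.mem_insert_iff.mpr (Or.inr (Set.mem_iUnion.mpr ⟨i, (ts i).self_mem_subTree⟩))

theorem mem_subTreeSet_child {L : Finset (RTree σ ar)} {f : σ}
    {ts : Fin (ar f) → RTree σ ar} (h : RTree.node f ts ∈ subTreeSet L)
    (i : Fin (ar f)) : ts i ∈ subTreeSet L := by
  rcases Set.mem_iUnion₂.mp h with ⟨u, hu, hsub⟩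
  exact Set.mem_iUnion₂.mpr ⟨u, hu, RTree.subTree_trans hsub (RTree.child_mem_subTree_s14 f ts i)⟩

theorem RTree.subTreeSeries_eq_zero {t s : RTree σ ar} (h : s ∉ t.subTree) :
    t.subTreeSeries s = 0 := by
  induction t with
  | node f ts ih =>
    rw [RTree.subTree, Set.mem_insert_iff] at h
    push_neg at h
    rw [RTree.subTreeSeries, if_neg h.1, zero_add]
    refine Finset.sum_eq_zero fun i _ => ih i ?_
    intro hmem
    exact (h.2 (Set.mem_iUnion.mpr ⟨i, hmem⟩)).elim

theorem subTreeSeriesL_eq_zero {L : Finset (RTree σ ar)} {s : RTree σ ar}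
    (h : s ∉ subTreeSet L) : subTreeSeriesL L s = 0 := by
  refine Finset.sum_eq_zero fun u hu => RTree.subTreeSeries_eq_zero fun hmem => ?_
  exact h (Set.mem_iUnion₂.mpr ⟨u, hu, hmem⟩)

theorem Δ_prod_iff (X Y : Finset (RTree σ ar)) (t : RTree σ ar)
    (pq : ↥(subTreeSet X) × ↥(subTreeSet Y)) :
    pq ∈ ((STAut X).prod (STAut Y)).Δ t ↔ pq.1.1 = t ∧ pq.2.1 = t := by
  induction t generalizing pq with
  | node f ts ih =>
    constructor
    · rintro ⟨qs, hδ, hmem⟩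
      have h1 : pq.1.1 = RTree.node f (fun i => (qs i).1.1) := hδ.1
      have h2 : pq.2.1 = RTree.node f (fun i => (qs i).2.1) := hδ.2
      have hc := fun i => (ih i (qs i)).mp (hmem i)
      refine ⟨h1.trans ?_, h2.trans ?_⟩
      · congr 1; funext i; exact (hc i).1
      · congr 1; funext i; exact (hc i).2
    · rintro ⟨h1, h2⟩
      have hX : ∀ i, ts i ∈ subTreeSet X := fun i =>
        mem_subTreeSet_child (h1 ▸ pq.1.2) i
      have hY : ∀ i, ts i ∈ subTreeSet Y := fun i =>
        mem_subTreeSet_child (h2 ▸ pq.2.2) i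
      refine ⟨fun i => (⟨ts i, hX i⟩, ⟨ts i, hY i⟩), ⟨h1, h2⟩, fun i => ?_⟩
      exact (ih i _).mpr ⟨rfl, rfl⟩

theorem P_prod_eq (X Y : Finset (RTree σ ar)) (t : RTree σ ar) :
    ((STAut X).prod (STAut Y)).P t = subTreeSeriesL X t * subTreeSeriesL Y t := by
  unfold RWTA.P
  by_cases hX : t ∈ subTreeSet X
  · by_cases hY : t ∈ subTreeSet Y
    · have hΔ : ((STAut X).prod (STAut Y)).Δ t = {((⟨t, hX⟩, ⟨t, hY⟩) : ((STAut X).prod (STAut Y)).Q)} := by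
        ext pq
        erw [Set.mem_singleton_iff, Δ_prod_iff]
        constructor
        · rintro ⟨h1, h2⟩
          exact Prod.ext (Subtype.ext h1) (Subtype.ext h2)
        · rintro rfl; exact ⟨rfl, rfl⟩
      erw [hΔ, finsum_mem_singleton]
      rfl
    · have hΔ : ((STAut X).prod (STAut Y)).Δ t = ∅ := by
        ext pq
        erw [Δ_prod_iff]
        simp only [Set.mem_empty_iff_false, iff_false, not_and]
        intro _ h2
        exact absurd (h2 ▸ pq.2.2) hY
      rw [hΔ, finsum_mem_empty, subTreeSeriesL_eq_zero hY, mul_zero]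
  · have hΔ : ((STAut X).prod (STAut Y)).Δ t = ∅ := by
      ext pq
      erw [Δ_prod_iff]
      simp only [Set.mem_empty_iff_false, iff_false, not_and]
      intro h1
      exact absurd (h1 ▸ pq.1.2) hX
    rw [hΔ, finsum_mem_empty, subTreeSeriesL_eq_zero hX, zero_mul]

/-- `SubTreeKernel(X,Y)` equals the sum over all trees of the coefficients of
the series realized by `STAut_X ⊙ STAut_Y` (which has finite support). -/
theorem subTreeKernel_eq_sum_prod_series (X Y : Finset (RTree σ ar)) :
    (Function.support ((STAut X).prod (STAut Y)).P).Finite ∧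
      subTreeKernel X Y = ∑ᶠ t, ((STAut X).prod (STAut Y)).P t := by
  constructor
  · refine (subTreeSet_finite X).subset fun t ht => ?_
    rw [Function.mem_support, P_prod_eq] at ht
    by_contra h
    rw [subTreeSeriesL_eq_zero h, zero_mul] at ht
    exact ht rfl
  · exact finsum_congr fun t => (P_prod_eq X Y t).symm
end
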